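/- Fix integers d ≥ 1, H ≥ 1, a gradient threshold θ > 0, and a degree bound Δ ≥ 2. Let f : ℝ^d → ℝ be a real polynomial of degree at most Δ and x ∈ ℝ^d. Then there is a universal constant C such that the dual cost function η ↦ ℓ(η, x, f) on ℝ_{≥0} is piecewise constant with at most C·Δ^H pieces; that is, ℝ_{≥0} can be partitioned into at most C·Δ^H intervals on each of which η ↦ ℓ(η, x, f) is constant. -/

import Mathlib

/-!
Along gradient descent on a polynomial `f` of degree `≤ Δ`, every coordinate of the iterate
`x_{i+1}` is a polynomial in the step size `η` of degree `< Δ ^ i`, so `‖∇f(x_{i+1})‖² - θ²` is a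
polynomial in `η` of degree `≤ 2 Δ ^ (i + 1)`. The cost only depends on the signs of these `H`
polynomials, and by the intermediate value theorem those signs are constant between consecutive
roots. The at most `4 Δ ^ H` roots cut `[0, ∞)` into at most `2 · 4 Δ ^ H + 1` intervals: the
roots themselves and the open gaps between them.
-/

/-- Gradient-descent iterates: `gdIter f x η i` is the `(i+1)`-st iterate `x_{i+1}`,
so `gdIter f x η 0 = x₁ = x` and `x_{i+1} = x_i - η ∇f(x_i)`. -/
noncomputable def gdIter {d : ℕ} (f : EuclideanSpace ℝ (Fin d) → ℝ)
    (x : EuclideanSpace ℝ (Fin d)) (η : ℝ) : ℕ → EuclideanSpace ℝ (Fin d)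
  | 0 => x
  | i + 1 => gdIter f x η i - η • gradient f (gdIter f x η i)

/-- Gradient-descent cost: the smallest `i ∈ {1,…,H}` with `‖∇f(x_i)‖ < θ` if it exists,
and `H` otherwise. -/
noncomputable def gdCost {d : ℕ} (H : ℕ) (θ : ℝ) (f : EuclideanSpace ℝ (Fin d) → ℝ)
    (x : EuclideanSpace ℝ (Fin d)) (η : ℝ) : ℕ :=
  sInf ({i | 1 ≤ i ∧ i ≤ H ∧ ‖gradient f (gdIter f x η (i - 1))‖ < θ} ∪ {H})

/-- `f : ℝ^d → ℝ` is a real polynomial of (total) degree at most `Δ`. -/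
def IsPolyDeg {d : ℕ} (Δ : ℕ) (f : EuclideanSpace ℝ (Fin d) → ℝ) : Prop :=
  ∃ P : MvPolynomial (Fin d) ℝ, P.totalDegree ≤ Δ ∧
    ∀ y : EuclideanSpace ℝ (Fin d), f y = MvPolynomial.eval (fun j => y j) P

open Finset
open scoped Polynomial

namespace MvPolynomial
variable {R σ : Type*} [CommSemiring R]

theorem polynomial_eval_aeval (P : MvPolynomial σ R) (A : σ → R[X]) (t : R) :
    (aeval A P).eval t = eval (fun j => (A j).eval t) P := by
  induction P using MvPolynomial.induction_on with
  | C a => simp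
  | add p q hp hq => simp [hp, hq]
  | mul_X p j hp => simp [hp]

theorem natDegree_aeval_le (P : MvPolynomial σ R) (A : σ → R[X]) {D : ℕ}
    (hA : ∀ j, (A j).natDegree ≤ D) : (aeval A P).natDegree ≤ P.totalDegree * D := by
  rw [aeval_def, eval₂_eq]
  refine Polynomial.natDegree_sum_le_of_forall_le _ _ fun m hm => ?_
  calc (Polynomial.C (coeff m P) * ∏ i ∈ m.support, A i ^ m i).natDegree
      ≤ ∑ i ∈ m.support, (A i ^ m i).natDegree :=
        (Polynomial.natDegree_C_mul_le _ _).trans (Polynomial.natDegree_prod_le _ _)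
    _ ≤ ∑ i ∈ m.support, m i * D :=
        sum_le_sum fun i _ => Polynomial.natDegree_pow_le.trans (Nat.mul_le_mul_left _ (hA i))
    _ = (∑ i ∈ m.support, m i) * D := (sum_mul ..).symm
    _ ≤ P.totalDegree * D := Nat.mul_le_mul_right _ (le_totalDegree hm)

theorem totalDegree_pderiv_le [DecidableEq σ] (P : MvPolynomial σ R) (j : σ) :
    (pderiv j P).totalDegree ≤ P.totalDegree := by
  conv_lhs => rw [P.as_sum, map_sum]
  refine totalDegree_finsetSum_le fun m hm => ?_
  rw [pderiv_monomial]
  refine (totalDegree_monomial_le _ _).trans (le_trans ?_ (le_totalDegree hm))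
  exact Finsupp.degree_mono tsub_le_self

end MvPolynomial
namespace MvPolynomial
variable {𝕜 σ : Type*} [RCLike 𝕜] [Fintype σ] [DecidableEq σ]

theorem hasFDerivAt_eval_euclidean (P : MvPolynomial σ 𝕜) (y : EuclideanSpace 𝕜 σ) :
    HasFDerivAt (fun z : EuclideanSpace 𝕜 σ => eval (fun j => z j) P)
      (∑ j, eval (fun i => y i) (pderiv j P) • EuclideanSpace.proj (𝕜 := 𝕜) j) y := by
  induction P using MvPolynomial.induction_on with
  | C a =>
    simp only [eval_C]
    exact (hasFDerivAt_const a y).congr_fderiv (by ext; simp)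
  | add p q hp hq =>
    simp only [map_add]
    exact (hp.fun_add hq).congr_fderiv (by ext; simp [add_mul, sum_add_distrib])
  | mul_X p j hp =>
    simp only [map_mul, eval_X]
    refine (hp.fun_mul (EuclideanSpace.proj j).hasFDerivAt).congr_fderiv ?_
    ext v
    simp [Pi.single_apply, mul_add, sum_add_distrib, mul_sum, apply_ite, mul_comm, mul_left_comm]

theorem gradient_eval_euclidean (P : MvPolynomial σ ℝ) (y : EuclideanSpace ℝ σ) :
    gradient (fun z : EuclideanSpace ℝ σ => eval (fun j => z j) P) y
      = WithLp.toLp 2 (fun j => eval (fun i => y i) (pderiv j P)) := by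
  refine (hasGradientAt_iff_hasFDerivAt.2 ?_).gradient
  refine (hasFDerivAt_eval_euclidean P y).congr_fderiv ?_
  ext v
  simp [PiLp.inner_apply, mul_comm]

end MvPolynomial

namespace Finset
variable {α : Type*} [LinearOrder α] (Z : Finset α)

/-- `Z` cuts `α` into the points of `Z` and the gaps between consecutive points; `a` lies in the
cell with index `2 k` if it is in the gap after `k` points of `Z`, and `2 k + 1` if it is the
`(k + 1)`-st point of `Z`. -/
noncomputable def cellIndex (a : α) : ℕ :=
  2 * #{z ∈ Z | z < a} + if a ∈ Z then 1 else 0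

variable {Z}

theorem card_filter_lt_mono {a b : α} (hab : a ≤ b) : #{z ∈ Z | z < a} ≤ #{z ∈ Z | z < b} :=
  card_le_card fun z hz => by
    simp only [mem_filter] at hz ⊢
    exact ⟨hz.1, hz.2.trans_le hab⟩

theorem card_filter_lt_lt_of_mem {a b : α} (ha : a ∈ Z) (hab : a < b) :
    #{z ∈ Z | z < a} < #{z ∈ Z | z < b} := by
  refine card_lt_card ((ssubset_iff_of_subset fun z hz => ?_).2 ⟨a, ?_, ?_⟩)
  · simp only [mem_filter] at hz ⊢
    exact ⟨hz.1, hz.2.trans hab⟩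
  · simp [ha, hab]
  · simp

theorem cellIndex_lt_cellIndex {a b : α} (hab : a < b) (h : a ∈ Z ∨ b ∈ Z) :
    Z.cellIndex a < Z.cellIndex b := by
  have hle := card_filter_lt_mono (Z := Z) hab.le
  have hlt : a ∈ Z → #{z ∈ Z | z < a} < #{z ∈ Z | z < b} := (card_filter_lt_lt_of_mem · hab)
  unfold cellIndex
  split_ifs <;> grind

theorem cellIndex_mono : Monotone Z.cellIndex := by
  intro a b hab
  rcases hab.eq_or_lt with rfl | hab
  · rfl
  by_cases ha : a ∈ Z
  · exact (cellIndex_lt_cellIndex hab (.inl ha)).le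
  have hle := card_filter_lt_mono (Z := Z) hab.le
  unfold cellIndex
  split_ifs <;> omega

theorem cellIndex_lt (a : α) : Z.cellIndex a < 2 * #Z + 1 := by
  have hle : #{z ∈ Z | z < a} ≤ #Z := card_filter_le _ _
  have hlt : a ∈ Z → #{z ∈ Z | z < a} < #Z := fun ha =>
    card_lt_card (filter_ssubset.2 ⟨a, ha, lt_irrefl a⟩)
  unfold cellIndex
  split_ifs <;> grind

theorem notMem_of_cellIndex_eq {a b : α} (hab : a < b) (h : Z.cellIndex a = Z.cellIndex b) :
    ∀ z ∈ Set.Icc a b, z ∉ Z := by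
  rintro z ⟨haz, hzb⟩ hz
  rcases haz.eq_or_lt with rfl | haz
  · exact (cellIndex_lt_cellIndex hab (.inl hz)).ne h
  · exact ((cellIndex_lt_cellIndex haz (.inr hz)).trans_le (cellIndex_mono hzb)).ne h

end Finset

def IsPiecewiseConstantOn {α β : Type*} [Preorder α] (g : α → β) (s : Set α) (n : ℕ) : Prop :=
  ∃ S : Fin n → Set α, (∀ k, (S k).OrdConnected) ∧ (⋃ k, S k) = s ∧
    (∀ k l, k ≠ l → Disjoint (S k) (S l)) ∧ ∀ k, ∃ c, ∀ a ∈ S k, g a = c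

theorem isPiecewiseConstantOn_of_finset {α β : Type*} [LinearOrder α] [Nonempty β] {g : α → β}
    {s : Set α} [hs : s.OrdConnected] (Z : Finset α)
    (hg : ∀ a b, a < b → (∀ z ∈ Set.Icc a b, z ∉ Z) → g a = g b) :
    IsPiecewiseConstantOn g s (2 * #Z + 1) := by
  have hconst : ∀ a b, Z.cellIndex a = Z.cellIndex b → g a = g b := by
    intro a b h
    rcases lt_trichotomy a b with hab | rfl | hab
    · exact hg a b hab (notMem_of_cellIndex_eq hab h)
    · rfl
    · exact (hg b a hab (notMem_of_cellIndex_eq hab h.symm)).symm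
  refine ⟨fun k => s ∩ Z.cellIndex ⁻¹' {(k : ℕ)}, fun k => ?_, ?_, fun k l hkl => ?_, fun k => ?_⟩
  · exact hs.inter (Set.ordConnected_singleton.preimage_mono cellIndex_mono)
  · ext a
    simp only [Set.mem_iUnion, Set.mem_inter_iff, Set.mem_preimage, Set.mem_singleton_iff]
    exact ⟨fun ⟨_, ha, _⟩ => ha, fun ha => ⟨⟨_, cellIndex_lt a⟩, ha, rfl⟩⟩
  · exact Set.disjoint_left.2 fun a ha hb => hkl (Fin.ext (ha.2.symm.trans hb.2))
  · rcases (s ∩ Z.cellIndex ⁻¹' {(k : ℕ)}).eq_empty_or_nonempty with h | ⟨a₀, ha₀⟩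
    · exact ⟨Classical.arbitrary β, by simp [h]⟩
    · exact ⟨g a₀, fun a ha => hconst a a₀ (ha.2.trans ha₀.2.symm)⟩

theorem Nat.sum_range_pow_succ_le {Δ : ℕ} (hΔ : 2 ≤ Δ) (H : ℕ) :
    ∑ i ∈ range H, Δ ^ (i + 1) ≤ 2 * Δ ^ H := by
  induction H with
  | zero => simp
  | succ H ih =>
    have : 2 * Δ ^ H ≤ Δ ^ (H + 1) := by
      rw [pow_succ']
      exact Nat.mul_le_mul_right _ hΔ
    rw [sum_range_succ]
    omega

theorem Polynomial.eval_lt_iff_of_forall_notMem_roots {q : ℝ[X]} {c a b : ℝ} (hab : a ≤ b)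
    (h : ∀ z ∈ Set.Icc a b, z ∉ (q - Polynomial.C c).roots) : q.eval a < c ↔ q.eval b < c := by
  by_contra hne
  have hc : c ∈ Set.uIcc (q.eval a) (q.eval b) := by
    rw [Set.mem_uIcc]
    grind
  obtain ⟨z, hz, hqz⟩ := intermediate_value_uIcc q.continuous.continuousOn hc
  have hq : q - Polynomial.C c ≠ 0 := fun h0 => hne (by simp [sub_eq_zero.1 h0])
  exact h z (Set.uIcc_of_le hab ▸ hz) ((Polynomial.mem_roots hq).2 (by simp [hqz]))

theorem gdCost_congr {d H : ℕ} {θ : ℝ} {f : EuclideanSpace ℝ (Fin d) → ℝ}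
    {x : EuclideanSpace ℝ (Fin d)} {η η' : ℝ}
    (h : ∀ i < H, (‖gradient f (gdIter f x η i)‖ < θ ↔ ‖gradient f (gdIter f x η' i)‖ < θ)) :
    gdCost H θ f x η = gdCost H θ f x η' := by
  unfold gdCost
  congr 2
  ext i
  exact and_congr_right fun _ => and_congr_right fun _ => h _ (by omega)

section GradientDescent
open MvPolynomial
variable {d : ℕ} (P : MvPolynomial (Fin d) ℝ) (x : EuclideanSpace ℝ (Fin d))

noncomputable def gdIterPoly : ℕ → Fin d → ℝ[X]
  | 0 => fun j => Polynomial.C (x j)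
  | i + 1 => fun j => gdIterPoly i j - Polynomial.X * aeval (gdIterPoly i) (pderiv j P)

noncomputable def gdGradPoly (i : ℕ) (j : Fin d) : ℝ[X] :=
  aeval (gdIterPoly P x i) (pderiv j P)

noncomputable def gdGradNormSqPoly (i : ℕ) : ℝ[X] :=
  ∑ j, gdGradPoly P x i j ^ 2

theorem gdIter_eq_toLp_eval (η : ℝ) (i : ℕ) :
    gdIter (fun z => eval (fun j => z j) P) x η i
      = WithLp.toLp 2 (fun j => (gdIterPoly P x i j).eval η) := by
  induction i with
  | zero =>
    ext j
    simp [gdIter, gdIterPoly]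
  | succ i ih =>
    rw [gdIter, ih, gradient_eval_euclidean]
    ext j
    simp [gdIterPoly, polynomial_eval_aeval]

theorem gradient_gdIter_eq_toLp_eval (η : ℝ) (i : ℕ) :
    gradient (fun z => eval (fun j => z j) P) (gdIter (fun z => eval (fun j => z j) P) x η i) =
      WithLp.toLp 2 (fun j => (gdGradPoly P x i j).eval η) := by
  rw [gdIter_eq_toLp_eval, gradient_eval_euclidean]
  simp [gdGradPoly, polynomial_eval_aeval]

theorem norm_gradient_gdIter_sq (η : ℝ) (i : ℕ) :
    ‖gradient (fun z => eval (fun j => z j) P)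
        (gdIter (fun z => eval (fun j => z j) P) x η i)‖ ^ 2 = (gdGradNormSqPoly P x i).eval η := by
  rw [gradient_gdIter_eq_toLp_eval, EuclideanSpace.norm_sq_eq]
  simp [gdGradNormSqPoly, Polynomial.eval_finsetSum]

variable {P} {Δ : ℕ}

theorem natDegree_gdGradPoly_le (hP : P.totalDegree ≤ Δ) {i D : ℕ}
    (hD : ∀ j, (gdIterPoly P x i j).natDegree ≤ D) (j : Fin d) :
    (gdGradPoly P x i j).natDegree ≤ Δ * D :=
  (natDegree_aeval_le _ _ hD).trans (Nat.mul_le_mul_right _ ((totalDegree_pderiv_le P j).trans hP))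

theorem natDegree_gdIterPoly_lt (hP : P.totalDegree ≤ Δ) (hΔ : 2 ≤ Δ) (i : ℕ) (j : Fin d) :
    (gdIterPoly P x i j).natDegree < Δ ^ i := by
  induction i generalizing j with
  | zero => simp [gdIterPoly]
  | succ i ih =>
    have hgrad := natDegree_gdGradPoly_le x hP (fun j => Nat.le_sub_one_of_lt (ih j)) j
    have hstep : Δ * (Δ ^ i - 1) + 1 < Δ ^ (i + 1) := by
      have := Nat.one_le_pow i Δ (by omega)
      rw [pow_succ', Nat.mul_sub_one]
      have : Δ ≤ Δ * Δ ^ i := Nat.le_mul_of_pos_right Δ this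
      omega
    have hX : (Polynomial.X * gdGradPoly P x i j).natDegree
        ≤ 1 + (gdGradPoly P x i j).natDegree :=
      Polynomial.natDegree_mul_le.trans_eq (by rw [Polynomial.natDegree_X])
    refine (Polynomial.natDegree_sub_le _ _).trans_lt (max_lt ?_ ?_)
    · exact (ih j).trans_le (Nat.pow_le_pow_right (by omega) i.le_succ)
    · exact (hX.trans (by omega)).trans_lt hstep

theorem natDegree_gdGradNormSqPoly_le (hP : P.totalDegree ≤ Δ) (hΔ : 2 ≤ Δ) (i : ℕ) :
    (gdGradNormSqPoly P x i).natDegree ≤ 2 * Δ ^ (i + 1) := by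
  refine Polynomial.natDegree_sum_le_of_forall_le _ _ fun j _ => ?_
  have hgrad := natDegree_gdGradPoly_le x hP
    (fun j => Nat.le_sub_one_of_lt (natDegree_gdIterPoly_lt x hP hΔ i j)) j
  have hpow : Δ * (Δ ^ i - 1) ≤ Δ ^ (i + 1) := by
    rw [pow_succ']
    exact Nat.mul_le_mul_left _ (Nat.sub_le _ _)
  exact Polynomial.natDegree_pow_le.trans (Nat.mul_le_mul_left 2 (hgrad.trans hpow))

variable (P)

noncomputable def gdCostRoots (H : ℕ) (θ : ℝ) : Finset ℝ :=
  (range H).biUnion fun i => (gdGradNormSqPoly P x i - Polynomial.C (θ ^ 2)).roots.toFinset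

variable {P}

theorem card_gdCostRoots_le (H : ℕ) (θ : ℝ) (hP : P.totalDegree ≤ Δ) (hΔ : 2 ≤ Δ) :
    #(gdCostRoots P x H θ) ≤ 4 * Δ ^ H :=
  calc #(gdCostRoots P x H θ)
      ≤ ∑ i ∈ range H, (gdGradNormSqPoly P x i - Polynomial.C (θ ^ 2)).natDegree :=
        card_biUnion_le.trans (sum_le_sum fun i _ =>
          (Multiset.toFinset_card_le _).trans (Polynomial.card_roots' _))
    _ ≤ ∑ i ∈ range H, 2 * Δ ^ (i + 1) := sum_le_sum fun i _ =>
        Polynomial.natDegree_sub_C.trans_le (natDegree_gdGradNormSqPoly_le x hP hΔ i)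
    _ ≤ 4 * Δ ^ H := by
        rw [← mul_sum]
        have := Nat.sum_range_pow_succ_le hΔ H
        omega

theorem gdCost_eq_of_forall_notMem_gdCostRoots {H : ℕ} {θ a b : ℝ} (hθ : 0 ≤ θ) (hab : a ≤ b)
    (h : ∀ z ∈ Set.Icc a b, z ∉ gdCostRoots P x H θ) :
    gdCost H θ (fun z => eval (fun j => z j) P) x a
      = gdCost H θ (fun z => eval (fun j => z j) P) x b := by
  refine gdCost_congr fun i hi => ?_
  have hsq : ∀ η, ‖gradient (fun z => eval (fun j => z j) P)
      (gdIter (fun z => eval (fun j => z j) P) x η i)‖ < θ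
        ↔ (gdGradNormSqPoly P x i).eval η < θ ^ 2 := fun η => by
    rw [← norm_gradient_gdIter_sq, pow_lt_pow_iff_left₀ (norm_nonneg _) hθ two_ne_zero]
  rw [hsq, hsq]
  exact Polynomial.eval_lt_iff_of_forall_notMem_roots hab fun z hz hroot =>
    h z hz (mem_biUnion.2 ⟨i, mem_range.2 hi, Multiset.mem_toFinset.2 hroot⟩)

end GradientDescent

/-- For a polynomial objective of degree at most `Δ`, the dual cost function
`η ↦ ℓ(η, x, f)` on `ℝ_{≥0}` is piecewise constant with at most `C·Δ^H` interval pieces,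
for a universal constant `C`. -/
theorem gd_poly_dual_cost_piecewise_constant :
    ∃ C : ℝ, 0 < C ∧
      ∀ (d H Δ : ℕ), 1 ≤ d → 1 ≤ H → 2 ≤ Δ →
      ∀ θ : ℝ, 0 < θ →
      ∀ (f : EuclideanSpace ℝ (Fin d) → ℝ), IsPolyDeg Δ f →
      ∀ x : EuclideanSpace ℝ (Fin d),
        ∃ n : ℕ, (n : ℝ) ≤ C * (Δ : ℝ) ^ H ∧
          ∃ S : Fin n → Set ℝ,
            (∀ k, (S k).OrdConnected) ∧
            (⋃ k, S k) = Set.Ici (0 : ℝ) ∧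
            (∀ k l, k ≠ l → Disjoint (S k) (S l)) ∧
            (∀ k, ∃ c : ℕ, ∀ η ∈ S k, gdCost H θ f x η = c) := by
  refine ⟨9, by norm_num, fun d H Δ _ _ hΔ θ hθ f ⟨P, hP, hfP⟩ x => ?_⟩
  obtain rfl : f = fun y => MvPolynomial.eval (fun j => y j) P := funext hfP
  have hcard := card_gdCostRoots_le x H θ hP hΔ
  have hpow : 1 ≤ Δ ^ H := Nat.one_le_pow _ _ (by omega)
  refine ⟨2 * #(gdCostRoots P x H θ) + 1, ?_, isPiecewiseConstantOn_of_finset _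
    fun a b hab hZ => gdCost_eq_of_forall_notMem_gdCostRoots x hθ.le hab.le hZ⟩
  exact_mod_cast (by omega : 2 * #(gdCostRoots P x H θ) + 1 ≤ 9 * Δ ^ H)
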